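/- Tweedie's formula: if x₀ has density q on ℝ^n and x = x₀ + ε with ε ~ N(0, τ²I_n) independent of x₀, then E[x₀ | x] = x + τ² ∇_x log p(x), where p is the marginal density of x. -/

import Mathlib

open MeasureTheory Real

/-- Isotropic Gaussian corruption kernel density `N(x; x₀, τ² I_n)`. -/
noncomputable def gaussKernel (n : ℕ) (τ : ℝ) (x₀ x : Fin n → ℝ) : ℝ :=
  ∏ j, (Real.sqrt (2 * Real.pi * τ ^ 2))⁻¹ * Real.exp (-(x j - x₀ j) ^ 2 / (2 * τ ^ 2))

/-- Marginal density `p(x) = ∫ N(x; x₀, τ² I_n) dq(x₀)`. -/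
noncomputable def marginalDensity (n : ℕ) (τ : ℝ) (q : Measure (Fin n → ℝ))
    (x : Fin n → ℝ) : ℝ :=
  ∫ x₀, gaussKernel n τ x₀ x ∂q

/-!
Differentiating under the integral sign, `∇ₓ N(x; x₀, τ²I) = N(x; x₀, τ²I) (x₀ - x) / τ²`, so
`τ² ∇p(x) = ∫ x₀ N(x; x₀, τ²I) dq(x₀) - x p(x)`, and dividing by `p(x)` gives the formula since
`∇ log p = ∇p / p`. Differentiation under the integral is legitimate for an arbitrary finite `q`
because `|t| exp (-t² / (2τ²)) ≤ τ`: the gradient of the kernel is bounded uniformly in `x₀` and `x`.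
-/

theorem abs_mul_exp_neg_sq_div_le {σ : ℝ} (hσ : 0 < σ) (t : ℝ) :
    |t| * exp (-t ^ 2 / (2 * σ ^ 2)) ≤ σ := by
  have hquad : |t| ≤ σ * (t ^ 2 / (2 * σ ^ 2) + 1) := by
    rw [← sq_abs t, show σ * (|t| ^ 2 / (2 * σ ^ 2) + 1) = (|t| ^ 2 + 2 * σ ^ 2) / (2 * σ) by
      field_simp, le_div_iff₀ (by positivity)]
    nlinarith [sq_nonneg (|t| - σ)]
  have hexp : |t| ≤ σ * exp (t ^ 2 / (2 * σ ^ 2)) :=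
    hquad.trans (by gcongr; exact add_one_le_exp _)
  rwa [neg_div, exp_neg, ← div_eq_mul_inv, div_le_iff₀ (exp_pos _)]

theorem ContinuousLinearMap.norm_proj_le_one {𝕜 ι : Type*} [NontriviallyNormedField 𝕜]
    [Fintype ι] {E : ι → Type*} [∀ j, SeminormedAddCommGroup (E j)] [∀ j, NormedSpace 𝕜 (E j)]
    (j : ι) : ‖ContinuousLinearMap.proj (R := 𝕜) (φ := E) j‖ ≤ 1 :=
  ContinuousLinearMap.opNorm_le_bound _ zero_le_one fun v => by
    simpa using norm_le_pi_norm v j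

noncomputable def gaussNormalizer (τ : ℝ) : ℝ := (√(2 * π * τ ^ 2))⁻¹

theorem gaussNormalizer_nonneg (τ : ℝ) : 0 ≤ gaussNormalizer τ :=
  inv_nonneg.mpr (sqrt_nonneg _)

section GaussKernel

variable {n : ℕ} {τ : ℝ}

theorem gaussKernel_eq_exp_sum (x₀ x : Fin n → ℝ) :
    gaussKernel n τ x₀ x =
      gaussNormalizer τ ^ n * exp (-(∑ j, (x j - x₀ j) ^ 2) / (2 * τ ^ 2)) := by
  rw [gaussKernel, Finset.prod_mul_distrib, Finset.prod_const, ← exp_sum, Finset.card_univ,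
    Fintype.card_fin, ← Finset.sum_div, Finset.sum_neg_distrib, gaussNormalizer]

theorem gaussKernel_nonneg (x₀ x : Fin n → ℝ) : 0 ≤ gaussKernel n τ x₀ x := by
  rw [gaussKernel_eq_exp_sum]
  have := gaussNormalizer_nonneg τ
  positivity

theorem gaussKernel_le_exp_coord (x₀ x : Fin n → ℝ) (j : Fin n) :
    gaussKernel n τ x₀ x ≤ gaussNormalizer τ ^ n * exp (-(x j - x₀ j) ^ 2 / (2 * τ ^ 2)) := by
  rw [gaussKernel_eq_exp_sum]
  have := gaussNormalizer_nonneg τ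
  gcongr
  exact Finset.single_le_sum (f := fun k => (x k - x₀ k) ^ 2) (fun k _ => sq_nonneg _)
    (Finset.mem_univ j)

theorem gaussKernel_le (x₀ x : Fin n → ℝ) : gaussKernel n τ x₀ x ≤ gaussNormalizer τ ^ n := by
  rw [gaussKernel_eq_exp_sum]
  have := gaussNormalizer_nonneg τ
  refine mul_le_of_le_one_right (by positivity) (exp_le_one_iff.mpr ?_)
  exact div_nonpos_of_nonpos_of_nonneg (neg_nonpos.mpr (by positivity)) (by positivity)

theorem abs_sub_mul_gaussKernel_le (hτ : 0 < τ) (x₀ x : Fin n → ℝ) (j : Fin n) :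
    |x₀ j - x j| * gaussKernel n τ x₀ x ≤ gaussNormalizer τ ^ n * τ := by
  have := gaussNormalizer_nonneg τ
  calc |x₀ j - x j| * gaussKernel n τ x₀ x
      ≤ |x j - x₀ j| * (gaussNormalizer τ ^ n * exp (-(x j - x₀ j) ^ 2 / (2 * τ ^ 2))) := by
        rw [abs_sub_comm]; gcongr; exact gaussKernel_le_exp_coord x₀ x j
    _ = gaussNormalizer τ ^ n * (|x j - x₀ j| * exp (-(x j - x₀ j) ^ 2 / (2 * τ ^ 2))) := by
        ring
    _ ≤ gaussNormalizer τ ^ n * τ := by gcongr; exact abs_mul_exp_neg_sq_div_le hτ _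

theorem continuous_gaussKernel (x : Fin n → ℝ) : Continuous fun x₀ => gaussKernel n τ x₀ x := by
  unfold gaussKernel; fun_prop

noncomputable def gaussKernelGrad (n : ℕ) (τ : ℝ) (x₀ x : Fin n → ℝ) : (Fin n → ℝ) →L[ℝ] ℝ :=
  gaussKernel n τ x₀ x •
    ∑ j, ((x₀ j - x j) / τ ^ 2) • (ContinuousLinearMap.proj j : (Fin n → ℝ) →L[ℝ] ℝ)

theorem hasFDerivAt_gaussKernel (x₀ x : Fin n → ℝ) :
    HasFDerivAt (gaussKernel n τ x₀) (gaussKernelGrad n τ x₀ x) x := by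
  have hsum : HasFDerivAt (fun y : Fin n → ℝ => ∑ j, (y j - x₀ j) ^ 2)
      (∑ j, (2 * (x j - x₀ j)) • (ContinuousLinearMap.proj j : (Fin n → ℝ) →L[ℝ] ℝ)) x :=
    HasFDerivAt.fun_sum fun j _ =>
      (((hasFDerivAt_apply (𝕜 := ℝ) j x).sub_const (x₀ j)).pow 2).congr_fderiv (by simp)
  have hexponent : HasFDerivAt (fun y : Fin n → ℝ => -(∑ j, (y j - x₀ j) ^ 2) / (2 * τ ^ 2))
      (∑ j, ((x₀ j - x j) / τ ^ 2) • (ContinuousLinearMap.proj j : (Fin n → ℝ) →L[ℝ] ℝ)) x := by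
    simp only [div_eq_mul_inv _ (2 * τ ^ 2)]
    refine (hsum.neg.mul_const (2 * τ ^ 2)⁻¹).congr_fderiv ?_
    ext v
    simp only [mul_inv_rev, smul_neg, neg_apply, smul_apply, sum_apply,
      ContinuousLinearMap.proj_apply, smul_eq_mul, Finset.mul_sum]
    rw [← Finset.sum_neg_distrib]
    exact Finset.sum_congr rfl fun j _ => by ring
  rw [show gaussKernel n τ x₀ = _ from funext (gaussKernel_eq_exp_sum x₀)]
  refine (hexponent.exp.const_mul (gaussNormalizer τ ^ n)).congr_fderiv ?_
  rw [gaussKernelGrad, gaussKernel_eq_exp_sum, smul_smul]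

theorem gaussKernelGrad_apply_single (x₀ x : Fin n → ℝ) (i : Fin n) :
    gaussKernelGrad n τ x₀ x (Pi.single i 1) = (x₀ i - x i) / τ ^ 2 * gaussKernel n τ x₀ x := by
  simp [gaussKernelGrad, Pi.single_apply, mul_comm]

theorem continuous_gaussKernelGrad (x : Fin n → ℝ) :
    Continuous fun x₀ => gaussKernelGrad n τ x₀ x := by
  unfold gaussKernelGrad
  exact (continuous_gaussKernel x).smul (continuous_finsetSum _ fun j _ =>
    (by fun_prop : Continuous fun x₀ : Fin n → ℝ => (x₀ j - x j) / τ ^ 2).smul continuous_const)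

theorem norm_gaussKernelGrad_le (hτ : 0 < τ) (x₀ x : Fin n → ℝ) :
    ‖gaussKernelGrad n τ x₀ x‖ ≤ n * (gaussNormalizer τ ^ n / τ) := by
  have hK := gaussKernel_nonneg (τ := τ) x₀ x
  calc ‖gaussKernelGrad n τ x₀ x‖
      ≤ gaussKernel n τ x₀ x * ∑ j, |(x₀ j - x j) / τ ^ 2| := by
        rw [gaussKernelGrad, norm_smul, Real.norm_of_nonneg hK]
        gcongr
        refine (norm_sum_le _ _).trans (Finset.sum_le_sum fun j _ => ?_)
        rw [norm_smul, Real.norm_eq_abs]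
        exact mul_le_of_le_one_right (abs_nonneg _) (ContinuousLinearMap.norm_proj_le_one j)
    _ = ∑ j, |x₀ j - x j| * gaussKernel n τ x₀ x / τ ^ 2 := by
        rw [Finset.mul_sum]
        refine Finset.sum_congr rfl fun j _ => ?_
        rw [abs_div, abs_of_nonneg (sq_nonneg τ)]
        ring
    _ ≤ ∑ _j : Fin n, gaussNormalizer τ ^ n * τ / τ ^ 2 :=
        Finset.sum_le_sum fun j _ =>
          div_le_div_of_nonneg_right (abs_sub_mul_gaussKernel_le hτ x₀ x j) (sq_nonneg τ)
    _ = n * (gaussNormalizer τ ^ n / τ) := by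
        rw [Finset.sum_const, Finset.card_univ, Fintype.card_fin, nsmul_eq_mul]
        field_simp

end GaussKernel

section MarginalDensity

variable {n : ℕ} {τ : ℝ} (q : Measure (Fin n → ℝ)) [IsFiniteMeasure q]

theorem integrable_gaussKernel (x : Fin n → ℝ) :
    Integrable (fun x₀ => gaussKernel n τ x₀ x) q :=
  .of_bound (continuous_gaussKernel x).aestronglyMeasurable (gaussNormalizer τ ^ n) <|
    ae_of_all _ fun x₀ => by
      rw [Real.norm_of_nonneg (gaussKernel_nonneg x₀ x)]
      exact gaussKernel_le x₀ x

theorem integrable_coord_mul_gaussKernel (hτ : 0 < τ) (x : Fin n → ℝ) (i : Fin n) :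
    Integrable (fun x₀ => x₀ i * gaussKernel n τ x₀ x) q := by
  have hcentered : Integrable (fun x₀ => (x₀ i - x i) * gaussKernel n τ x₀ x) q :=
    .of_bound (((continuous_apply i).sub continuous_const).mul
      (continuous_gaussKernel x)).aestronglyMeasurable (gaussNormalizer τ ^ n * τ) <|
      ae_of_all _ fun x₀ => by
        rw [norm_mul, Real.norm_eq_abs, Real.norm_of_nonneg (gaussKernel_nonneg x₀ x)]
        exact abs_sub_mul_gaussKernel_le hτ x₀ x i
  refine (hcentered.add ((integrable_gaussKernel (τ := τ) q x).const_mul (x i))).congr <|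
    ae_of_all _ fun x₀ => ?_
  simp only [Pi.add_apply]
  ring

theorem integrable_gaussKernelGrad (hτ : 0 < τ) (x : Fin n → ℝ) :
    Integrable (fun x₀ => gaussKernelGrad n τ x₀ x) q :=
  .of_bound (continuous_gaussKernelGrad x).aestronglyMeasurable _ <|
    ae_of_all _ fun x₀ => norm_gaussKernelGrad_le hτ x₀ x

theorem hasFDerivAt_marginalDensity (hτ : 0 < τ) (x : Fin n → ℝ) :
    HasFDerivAt (marginalDensity n τ q) (∫ x₀, gaussKernelGrad n τ x₀ x ∂q) x :=
  hasFDerivAt_integral_of_dominated_of_fderiv_le Filter.univ_mem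
    (.of_forall fun y => (continuous_gaussKernel y).aestronglyMeasurable)
    (integrable_gaussKernel q x) (continuous_gaussKernelGrad x).aestronglyMeasurable
    (ae_of_all _ fun x₀ y _ => norm_gaussKernelGrad_le hτ x₀ y) (integrable_const _)
    (ae_of_all _ fun x₀ y _ => hasFDerivAt_gaussKernel x₀ y)

theorem integral_gaussKernelGrad_apply_single (hτ : 0 < τ) (x : Fin n → ℝ) (i : Fin n) :
    (∫ x₀, gaussKernelGrad n τ x₀ x ∂q) (Pi.single i 1) =
      ((∫ x₀, x₀ i * gaussKernel n τ x₀ x ∂q) - x i * marginalDensity n τ q x) / τ ^ 2 := by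
  rw [ContinuousLinearMap.integral_apply (integrable_gaussKernelGrad q hτ x), marginalDensity,
    ← integral_const_mul, ← integral_sub (integrable_coord_mul_gaussKernel q hτ x i)
      ((integrable_gaussKernel q x).const_mul _), ← integral_div]
  congr 1 with x₀
  rw [gaussKernelGrad_apply_single]
  ring

end MarginalDensity

/-- Tweedie's formula: if `x₀ ~ q` and `x = x₀ + ε` with `ε ~ N(0, τ² I_n)`
independent of `x₀`, then the posterior mean satisfies
`E[x₀ | x] = x + τ² ∇_x log p(x)`, where `p` is the marginal density of `x`.
The conditional expectation is written explicitly as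
`E[x₀ | x] i = (∫ x₀ i · K(x₀, x) dq(x₀)) / p(x)`. -/
theorem tweedie_formula (n : ℕ) (τ : ℝ) (hτ : 0 < τ)
    (q : Measure (Fin n → ℝ)) [IsProbabilityMeasure q]
    (x : Fin n → ℝ) (hp : marginalDensity n τ q x ≠ 0) (i : Fin n) :
    (∫ x₀, x₀ i * gaussKernel n τ x₀ x ∂q) / marginalDensity n τ q x
      = x i + τ ^ 2 *
          fderiv ℝ (fun y => Real.log (marginalDensity n τ q y)) x (Pi.single i 1) := by
  rw [((hasFDerivAt_marginalDensity q hτ x).log hp).fderiv, smul_apply, smul_eq_mul,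
    integral_gaussKernelGrad_apply_single q hτ x i]
  field_simp
  ring
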